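/- The first alternative deformation J_n^{(1,μ)}(x) = Σ_{k≥0} (−1)^k/(k! [k+n]_μ!) (x/2)^{2k+n} satisfies x D_μ J_n^{(1,μ)}(x) = −x J_{n+1}^{(1,μ)}(x) + [n]_μ J_n^{(1,μ)}(x). -/

import Mathlib

/-!
Writing `J_n^{(1,μ)}(x) = ∑ c_k (x/2)^{2k+n}`, the Euler operator `x d/dx` multiplies the `k`-th
term by `2k + n`. The `n` part gives `n J_n`, and the `2k` part, shifted by one index, is
`-x J_{n+1}` because `(k+1) c_{k+1}^{(n)} = -c_k^{(n+1)}`. Since `J_n` has the parity of `n`, the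
difference part of the Dunkl operator contributes `μ (1 - (-1)^n) J_n`, completing `[n]_μ J_n`.
-/

/-- The Dunkl operator `D_μ f(x) = f'(x) + μ (f(x) - f(-x))/x`. -/
noncomputable def dunkl (μ : ℝ) (f : ℝ → ℝ) (x : ℝ) : ℝ :=
  deriv f x + μ * (f x - f (-x)) / x

/-- The deformed integer `[n]_μ = n + μ (1 - (-1)^n)`. -/
noncomputable def dIdx (μ : ℝ) (n : ℕ) : ℝ := n + μ * (1 - (-1 : ℝ) ^ n)

/-- The deformed factorial `[n]_μ!`. -/
noncomputable def dFact (μ : ℝ) : ℕ → ℝ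
  | 0 => 1
  | n + 1 => dIdx μ (n + 1) * dFact μ n

/-- The first alternative deformed Bessel function `J_n^{(1,μ)}`. -/
noncomputable def J1mu (μ : ℝ) (n : ℕ) (x : ℝ) : ℝ :=
  ∑' k : ℕ, (-1 : ℝ) ^ k / ((Nat.factorial k) * dFact μ (k + n)) * (x / 2) ^ (2 * k + n)

lemma natCast_mul_pow_sub_one_le {R : ℝ} (hR : 1 ≤ R) (m : ℕ) :
    (m : ℝ) * R ^ (m - 1) ≤ (2 * R) ^ m := by
  have hm : (m : ℝ) ≤ 2 ^ m := by exact_mod_cast Nat.lt_two_pow_self.le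
  rw [mul_pow]
  exact mul_le_mul hm (pow_le_pow_right₀ hR (m.sub_le 1)) (by positivity) (by positivity)

section GeneralizedPowerSeries

variable {a : ℕ → ℝ} {m : ℕ → ℕ}

theorem hasDerivAt_tsum_mul_pow (ha : ∀ R, Summable fun k => |a k| * R ^ m k) (z : ℝ) :
    HasDerivAt (fun z => ∑' k, a k * z ^ m k) (∑' k, a k * (m k * z ^ (m k - 1))) z := by
  set R := |z| + 1
  have hR : 1 ≤ R := by simp [R]
  have hball : ∀ y ∈ Metric.ball (0 : ℝ) R, |y| ≤ R := fun y hy => by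
    rw [Metric.mem_ball, Real.dist_eq, sub_zero] at hy
    exact hy.le
  have hz : z ∈ Metric.ball (0 : ℝ) R := by simp [R]
  refine hasDerivAt_tsum_of_isPreconnected (ha (2 * R)) Metric.isOpen_ball
    (convex_ball 0 R).isPreconnected (fun k y _ => (hasDerivAt_pow (m k) y).const_mul (a k))
    (fun k y hy => ?_) hz ((ha |z|).of_norm_bounded fun k => by simp) hz
  calc ‖a k * (m k * y ^ (m k - 1))‖ = |a k| * (m k * |y| ^ (m k - 1)) := by simp
    _ ≤ |a k| * (m k * R ^ (m k - 1)) := by gcongr; exact hball y hy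
    _ ≤ |a k| * (2 * R) ^ m k := by gcongr; exact natCast_mul_pow_sub_one_le hR _

lemma mul_tsum_mul_pow_sub_one (z : ℝ) :
    z * ∑' k, a k * (m k * z ^ (m k - 1)) = ∑' k, m k * (a k * z ^ m k) := by
  rw [← tsum_mul_left]
  refine tsum_congr fun k => ?_
  rcases eq_or_ne (m k) 0 with h | h
  · simp [h]
  · rw [← mul_pow_sub_one h z]
    ring

end GeneralizedPowerSeries

lemma natCast_le_dIdx {μ : ℝ} (hμ : 0 ≤ μ) (m : ℕ) : (m : ℝ) ≤ dIdx μ m := by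
  unfold dIdx
  rcases Nat.even_or_odd m with h | h
  · simp [h.neg_one_pow]
  · simp [h.neg_one_pow]
    positivity

lemma one_le_dFact {μ : ℝ} (hμ : 0 ≤ μ) (m : ℕ) : 1 ≤ dFact μ m := by
  induction m with
  | zero => exact le_rfl
  | succ m ih =>
    have h := natCast_le_dIdx hμ (m + 1)
    push_cast at h
    exact one_le_mul_of_one_le_of_one_le (by linarith) ih

noncomputable def J1muCoeff (μ : ℝ) (n k : ℕ) : ℝ :=
  (-1 : ℝ) ^ k / (k.factorial * dFact μ (k + n))

lemma J1mu_eq_tsum (μ : ℝ) (n : ℕ) (x : ℝ) :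
    J1mu μ n x = ∑' k, J1muCoeff μ n k * (x / 2) ^ (2 * k + n) := rfl

lemma abs_J1muCoeff_le {μ : ℝ} (hμ : 0 ≤ μ) (n k : ℕ) :
    |J1muCoeff μ n k| ≤ (k.factorial : ℝ)⁻¹ := by
  have hd := one_le_dFact hμ (k + n)
  rw [J1muCoeff, abs_div, abs_pow, abs_neg, abs_one, one_pow, one_div,
    abs_of_pos (by positivity)]
  exact inv_anti₀ (by positivity) (le_mul_of_one_le_right (by positivity) hd)

lemma summable_abs_J1muCoeff_mul_pow {μ : ℝ} (hμ : 0 ≤ μ) (n : ℕ) (R : ℝ) :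
    Summable fun k => |J1muCoeff μ n k| * R ^ (2 * k + n) := by
  have hexp : Summable fun k => |R| ^ n * ((|R| ^ 2) ^ k / k.factorial) :=
    (Real.summable_pow_div_factorial _).mul_left _
  refine hexp.of_norm_bounded fun k => ?_
  calc ‖|J1muCoeff μ n k| * R ^ (2 * k + n)‖ = |J1muCoeff μ n k| * |R| ^ (2 * k + n) := by simp
    _ ≤ (k.factorial : ℝ)⁻¹ * |R| ^ (2 * k + n) := by gcongr; exact abs_J1muCoeff_le hμ n k
    _ = |R| ^ n * ((|R| ^ 2) ^ k / k.factorial) := by ring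

lemma hasSum_J1mu {μ : ℝ} (hμ : 0 ≤ μ) (n : ℕ) (x : ℝ) :
    HasSum (fun k => J1muCoeff μ n k * (x / 2) ^ (2 * k + n)) (J1mu μ n x) :=
  ((summable_abs_J1muCoeff_mul_pow hμ n |x / 2|).of_norm_bounded fun k => by
    rw [Real.norm_eq_abs, abs_mul, abs_pow]).hasSum

lemma hasDerivAt_J1mu {μ : ℝ} (hμ : 0 ≤ μ) (n : ℕ) (x : ℝ) :
    HasDerivAt (J1mu μ n)
      ((∑' k, J1muCoeff μ n k * ((2 * k + n : ℕ) * (x / 2) ^ (2 * k + n - 1))) * (1 / 2)) x := by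
  have hS := hasDerivAt_tsum_mul_pow (m := fun k => 2 * k + n)
    (summable_abs_J1muCoeff_mul_pow hμ n) (x / 2)
  exact hS.comp x ((hasDerivAt_id' x).div_const 2)

lemma J1mu_neg (μ : ℝ) (n : ℕ) (x : ℝ) : J1mu μ n (-x) = (-1) ^ n * J1mu μ n x := by
  rw [J1mu_eq_tsum, J1mu_eq_tsum, ← tsum_mul_left]
  refine tsum_congr fun k => ?_
  rw [neg_div, neg_pow, pow_add, pow_mul, neg_one_sq, one_pow]
  ring

lemma natCast_succ_mul_J1muCoeff_succ (μ : ℝ) (n k : ℕ) :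
    ((k + 1 : ℕ) : ℝ) * J1muCoeff μ n (k + 1) = -J1muCoeff μ (n + 1) k := by
  rw [J1muCoeff, J1muCoeff, Nat.factorial_succ, pow_succ, Nat.cast_mul, mul_assoc, mul_div_assoc',
    mul_div_mul_left _ _ (by positivity), show k + 1 + n = k + (n + 1) by omega]
  ring

lemma hasSum_two_mul_J1muCoeff_mul_pow (μ : ℝ) (n : ℕ) (z s : ℝ)
    (hs : HasSum (fun k => J1muCoeff μ (n + 1) k * z ^ (2 * k + (n + 1))) s) :
    HasSum (fun k : ℕ => 2 * (k : ℝ) * (J1muCoeff μ n k * z ^ (2 * k + n))) (-(2 * z) * s) := by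
  rw [← Nat.succ_injective.hasSum_iff fun k hk => ?_]
  · refine (hs.mul_left (-(2 * z))).congr_fun fun k => ?_
    have hc := natCast_succ_mul_J1muCoeff_succ μ n k
    push_cast at hc
    rw [Function.comp_apply, Nat.succ_eq_add_one, show 2 * (k + 1) + n = 2 * k + (n + 1) + 1 by ring,
      pow_succ]
    push_cast
    linear_combination (2 * z * z ^ (2 * k + (n + 1))) * hc
  · obtain rfl : k = 0 := by simpa using hk
    simp

theorem mul_deriv_J1mu {μ : ℝ} (hμ : 0 ≤ μ) (n : ℕ) (x : ℝ) :
    x * deriv (J1mu μ n) x = -x * J1mu μ (n + 1) x + n * J1mu μ n x := by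
  have hEuler : HasSum (fun k => ((2 * k + n : ℕ) : ℝ) * (J1muCoeff μ n k * (x / 2) ^ (2 * k + n)))
      (-x * J1mu μ (n + 1) x + n * J1mu μ n x) := by
    convert (hasSum_two_mul_J1muCoeff_mul_pow μ n (x / 2) _ (hasSum_J1mu hμ (n + 1) x)).add
      ((hasSum_J1mu hμ n x).mul_left (n : ℝ)) using 1
    · ext k
      push_cast
      ring
    · ring
  rw [(hasDerivAt_J1mu hμ n x).deriv, ← hEuler.tsum_eq,
    ← mul_tsum_mul_pow_sub_one (m := fun k => 2 * k + n)]
  ring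

/-- `x D_μ J_n^{(1,μ)}(x) = -x J_{n+1}^{(1,μ)}(x) + [n]_μ J_n^{(1,μ)}(x)`. -/
theorem J1mu_recursion (μ : ℝ) (hμ : 0 ≤ μ) (n : ℕ) (x : ℝ) (hx : x ≠ 0) :
    x * dunkl μ (J1mu μ n) x = -x * J1mu μ (n + 1) x + dIdx μ n * J1mu μ n x := by
  rw [dunkl, mul_add, mul_deriv_J1mu hμ, mul_div_cancel₀ _ hx, J1mu_neg, dIdx]
  ring
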